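/- arXiv:1101.5421 — 5 statements merged into one kernel-verified Lean document; each statement's English description precedes it below -/
import Mathlib

section
/- For every oriented graph D: hom_IV(D) ≥ hom_I(D), where hom_IV(D) = ∑_{x,x'}(d⁺⁺(x,x')² + d⁻⁻(x,x')²) and hom_I(D) = 2∑_{x,x'} d⁺⁻(x,x')·d⁻⁺(x,x'). -/
open Finset Matrix

/-- Joint degree d⁺⁺ -/
noncomputable def dpp {n : ℕ} (M : Matrix (Fin n) (Fin n) ℝ) (x x' : Fin n) : ℕ :=
  (Finset.univ.filter fun y => M x y = 1 ∧ M x' y = 1).card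

/-- Joint degree d⁻⁻ -/
noncomputable def dmm {n : ℕ} (M : Matrix (Fin n) (Fin n) ℝ) (x x' : Fin n) : ℕ :=
  (Finset.univ.filter fun y => M x y = -1 ∧ M x' y = -1).card

/-- Joint degree d⁺⁻ -/
noncomputable def dpm {n : ℕ} (M : Matrix (Fin n) (Fin n) ℝ) (x x' : Fin n) : ℕ :=
  (Finset.univ.filter fun y => M x y = 1 ∧ M x' y = -1).card

/-- Joint degree d⁻⁺ -/
noncomputable def dmp {n : ℕ} (M : Matrix (Fin n) (Fin n) ℝ) (x x' : Fin n) : ℕ :=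
  (Finset.univ.filter fun y => M x y = -1 ∧ M x' y = 1).card

/-!
By AM-GM, `hom_I ≤ ∑ (d⁺⁻² + d⁻⁺²)`, and `d⁻⁺(x, x') = d⁺⁻(x', x)` makes this `2 ∑ d⁺⁻²`.
Both `∑ d⁺⁻(x, x')²` and `∑ d⁺⁺(y, y') d⁻⁻(y, y')` count the quadruples `(x, x', y, y')` with
`x → y`, `x → y'`, `y → x'`, `y' → x'`, so by AM-GM again `2 ∑ d⁺⁻² ≤ hom_IV`.
-/

section JointDegree

variable {ι α : Type*} [Fintype ι] [DecidableEq α]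

def jointDegree (M : Matrix ι ι α) (a b : α) (x x' : ι) : ℕ :=
  (univ.filter fun y => M x y = a ∧ M x' y = b).card

lemma jointDegree_comm (M : Matrix ι ι α) (a b : α) (x x' : ι) :
    jointDegree M a b x x' = jointDegree M b a x' x := by
  simp only [jointDegree, and_comm]

lemma jointDegree_neg [InvolutiveNeg α] (M : Matrix ι ι α) (a b : α) :
    jointDegree (-M) a b = jointDegree M (-a) (-b) := by
  ext x x'
  simp only [jointDegree, Matrix.neg_apply, neg_eq_iff_eq_neg]

lemma jointDegree_mul_jointDegree (M : Matrix ι ι α) (a b c d : α) (x x' : ι) :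
    jointDegree M a b x x' * jointDegree M c d x x' =
      ∑ y, ∑ y', if (M x y = a ∧ M x' y = b) ∧ M x y' = c ∧ M x' y' = d then 1 else 0 := by
  simp only [jointDegree, card_filter, sum_mul_sum, ite_zero_mul_ite_zero, mul_one]

/-- Both sides count the quadruples `(x, x', y, y')` with
`M x y = a`, `M x' y = b`, `M x y' = c` and `M x' y' = d`. -/
lemma sum_jointDegree_mul_eq_sum_jointDegree_transpose_mul (M : Matrix ι ι α) (a b c d : α) :
    ∑ x, ∑ x', jointDegree M a b x x' * jointDegree M c d x x' =
      ∑ y, ∑ y', jointDegree Mᵀ a c y y' * jointDegree Mᵀ b d y y' := by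
  simp only [jointDegree_mul_jointDegree, transpose_apply, ← Fintype.sum_prod_type']
  refine Fintype.sum_equiv ((Equiv.prodAssoc ι ι (ι × ι)).symm.trans
    ((Equiv.prodComm _ _).trans (Equiv.prodAssoc ι ι (ι × ι)))) _ _ fun p => if_congr ?_ rfl rfl
  tauto

lemma sum_jointDegree_mul_of_transpose_eq_neg [InvolutiveNeg α] {M : Matrix ι ι α}
    (hM : Mᵀ = -M) (a b c d : α) :
    ∑ x, ∑ x', jointDegree M a b x x' * jointDegree M c d x x' =
      ∑ y, ∑ y', jointDegree M (-a) (-c) y y' * jointDegree M (-b) (-d) y y' := by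
  rw [sum_jointDegree_mul_eq_sum_jointDegree_transpose_mul, hM, jointDegree_neg, jointDegree_neg]

end JointDegree

lemma two_mul_sum_sum_mul_le {ι : Type*} [Fintype ι] (f g : ι → ι → ℕ) :
    2 * ∑ x, ∑ x', f x x' * g x x' ≤ ∑ x, ∑ x', (f x x' ^ 2 + g x x' ^ 2) := by
  simp only [mul_sum, ← mul_assoc]
  exact sum_le_sum fun x _ => sum_le_sum fun x' _ => two_mul_le_add_sq _ _

theorem stmt3_general {n : ℕ} (M : Matrix (Fin n) (Fin n) ℝ)
    (hanti : Mᵀ = -M) :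
    ∑ x : Fin n, ∑ x' : Fin n, (dpp M x x' ^ 2 + dmm M x x' ^ 2) ≥
      2 * ∑ x : Fin n, ∑ x' : Fin n, dpm M x x' * dmp M x x' := by
  have hdpm : dpm M = jointDegree M 1 (-1) := rfl
  have hdmp : ∀ x x', dmp M x x' = dpm M x' x := fun x x' => jointDegree_comm M _ _ x x'
  have hsq : ∑ x, ∑ x', dpm M x x' ^ 2 = ∑ x, ∑ x', dpp M x x' * dmm M x x' := by
    simp only [sq, hdpm]
    rw [sum_jointDegree_mul_of_transpose_eq_neg hanti, neg_neg]
    exact sum_congr rfl fun x _ => sum_congr rfl fun x' _ => mul_comm _ _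
  calc 2 * ∑ x, ∑ x', dpm M x x' * dmp M x x'
      ≤ ∑ x, ∑ x', (dpm M x x' ^ 2 + dmp M x x' ^ 2) := two_mul_sum_sum_mul_le _ _
    _ = 2 * ∑ x, ∑ x', dpp M x x' * dmm M x x' := by
      simp only [sum_add_distrib, hdmp]
      rw [sum_comm (f := fun x x' => dpm M x' x ^ 2), hsq, two_mul]
    _ ≤ ∑ x, ∑ x', (dpp M x x' ^ 2 + dmm M x x' ^ 2) := two_mul_sum_sum_mul_le _ _

theorem stmt3 {n : ℕ} (M : Matrix (Fin n) (Fin n) ℝ)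
    (hanti : Mᵀ = -M)
    (hent : ∀ x y, M x y = -1 ∨ M x y = 0 ∨ M x y = 1) :
    ∑ x : Fin n, ∑ x' : Fin n, (dpp M x x' ^ 2 + dmm M x x' ^ 2) ≥
      2 * ∑ x : Fin n, ∑ x' : Fin n, dpm M x x' * dmp M x x' :=
  stmt3_general M hanti
end

section
/- For every oriented graph D: 4·hom_IV(D) ≥ hom_II(D), where hom_IV(D) = ∑_{x,x'}(d⁺⁺(x,x')² + d⁻⁻(x,x')²) and hom_II(D) = 2∑_{x,x'}(d⁺⁺(x,x')+d⁻⁻(x,x'))·(d⁺⁻(x,x')+d⁻⁺(x,x')). -/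
open Finset Matrix

/-!
Let `A` be the 0/1 arc matrix of `D`. Then `d⁺⁺ = AAᵀ`, `d⁻⁻ = AᵀA`, `d⁺⁻ = A²` and `d⁻⁺ = (A²)ᵀ`,
so with the Frobenius inner product `⟨X, Y⟩ = tr (XᵀY)` the claim reads
`⟨AAᵀ, A²⟩ + ⟨AᵀA, A²⟩ ≤ ‖AAᵀ‖² + ‖AᵀA‖²`. It follows from `2⟨X, Y⟩ ≤ ‖X‖² + ‖Y‖²` applied three
times, because `‖A²‖² = tr (AᵀAᵀAA) = ⟨AAᵀ, AᵀA⟩` by cyclicity of the trace.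
-/

namespace Matrix

variable {m n : Type*} [Fintype m] [Fintype n]

lemma sum_sum_mul_eq_trace_transpose_mul (X Y : Matrix m n ℝ) :
    ∑ i, ∑ j, X i j * Y i j = trace (Xᵀ * Y) := by
  simp only [trace, diag, mul_apply, transpose_apply]
  exact Finset.sum_comm

lemma trace_transpose_mul_self_nonneg (X : Matrix m n ℝ) : 0 ≤ trace (Xᵀ * X) := by
  rw [← sum_sum_mul_eq_trace_transpose_mul]
  exact Finset.sum_nonneg fun i _ => Finset.sum_nonneg fun j _ => mul_self_nonneg (X i j)

lemma two_mul_trace_transpose_mul_le (X Y : Matrix m n ℝ) :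
    2 * trace (Xᵀ * Y) ≤ trace (Xᵀ * X) + trace (Yᵀ * Y) := by
  have h := trace_transpose_mul_self_nonneg (X - Y)
  have hYX : trace (Yᵀ * X) = trace (Xᵀ * Y) := by
    rw [← trace_transpose, transpose_mul, transpose_transpose]
  simp only [transpose_sub, Matrix.sub_mul, Matrix.mul_sub, trace_sub, hYX] at h
  linarith

lemma trace_gram_mul_sq_le (A : Matrix m m ℝ) :
    trace (A * Aᵀ * (A * A)) + trace (Aᵀ * A * (A * A)) ≤
      trace (A * Aᵀ * (A * Aᵀ)) + trace (Aᵀ * A * (Aᵀ * A)) := by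
  set G := A * Aᵀ with hG
  set H := Aᵀ * A with hH
  set K := A * A with hK
  have hGt : Gᵀ = G := by rw [hG, transpose_mul, transpose_transpose]
  have hHt : Hᵀ = H := by rw [hH, transpose_mul, transpose_transpose]
  have hGK := two_mul_trace_transpose_mul_le G K
  have hHK := two_mul_trace_transpose_mul_le H K
  have hGH := two_mul_trace_transpose_mul_le G H
  have hKK : trace (Kᵀ * K) = trace (G * H) := by
    rw [hK, hG, hH, transpose_mul, ← Matrix.mul_assoc, trace_mul_comm _ A]
    simp only [Matrix.mul_assoc]
  rw [hGt] at hGK hGH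
  rw [hHt] at hHK hGH
  linarith

theorem two_mul_sum_gram_mul_sq_le (A : Matrix m m ℝ) :
    2 * ∑ x, ∑ x', ((A * Aᵀ) x x' + (Aᵀ * A) x x') * ((A * A) x x' + (A * A)ᵀ x x') ≤
      4 * ∑ x, ∑ x', ((A * Aᵀ) x x' ^ 2 + (Aᵀ * A) x x' ^ 2) := by
  have hG : (A * Aᵀ)ᵀ = A * Aᵀ := by rw [transpose_mul, transpose_transpose]
  have hH : (Aᵀ * A)ᵀ = Aᵀ * A := by rw [transpose_mul, transpose_transpose]
  have htr : ∀ S : Matrix m m ℝ, Sᵀ = S → trace (S * (A * A)ᵀ) = trace (S * (A * A)) :=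
    fun S hS => by rw [← trace_transpose, transpose_mul, transpose_transpose, hS, trace_mul_comm]
  have hlhs : ∑ x, ∑ x', ((A * Aᵀ) x x' + (Aᵀ * A) x x') * ((A * A) x x' + (A * A)ᵀ x x') =
      2 * (trace (A * Aᵀ * (A * A)) + trace (Aᵀ * A * (A * A))) := by
    simp only [← add_apply, sum_sum_mul_eq_trace_transpose_mul, transpose_add, hG, hH,
      Matrix.mul_add, Matrix.add_mul, trace_add, htr _ hG, htr _ hH]
    ring
  have hrhs : ∑ x, ∑ x', ((A * Aᵀ) x x' ^ 2 + (Aᵀ * A) x x' ^ 2) =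
      trace (A * Aᵀ * (A * Aᵀ)) + trace (Aᵀ * A * (Aᵀ * A)) := by
    simp only [sq, Finset.sum_add_distrib, sum_sum_mul_eq_trace_transpose_mul, hG, hH]
  rw [hlhs, hrhs]
  linarith [trace_gram_mul_sq_le A]

end Matrix

noncomputable def arcMatrix {m : Type*} (M : Matrix m m ℝ) : Matrix m m ℝ :=
  Matrix.of fun x y => if M x y = 1 then 1 else 0

section JointDegrees

variable {n : ℕ} {M : Matrix (Fin n) (Fin n) ℝ}

lemma eq_neg_one_iff_of_transpose_eq_neg (hanti : Mᵀ = -M) (x y : Fin n) :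
    M x y = -1 ↔ M y x = 1 := by
  have h : M y x = -M x y := by simpa using congrFun (congrFun hanti x) y
  rw [h, neg_eq_iff_eq_neg]

lemma natCast_card_filter_and (p q : Fin n → Prop) [DecidablePred p] [DecidablePred q] :
    ((univ.filter fun y => p y ∧ q y).card : ℝ) =
      ∑ y, (if p y then 1 else 0) * (if q y then 1 else 0) := by
  simp only [natCast_card_filter, ite_zero_mul_ite_zero, mul_one]

lemma dpp_eq_arcMatrix (M : Matrix (Fin n) (Fin n) ℝ) (x x' : Fin n) :
    (dpp M x x' : ℝ) = (arcMatrix M * (arcMatrix M)ᵀ) x x' := by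
  simp only [dpp, natCast_card_filter_and, mul_apply, transpose_apply, arcMatrix, of_apply]

lemma dmm_eq_arcMatrix (hanti : Mᵀ = -M) (x x' : Fin n) :
    (dmm M x x' : ℝ) = ((arcMatrix M)ᵀ * arcMatrix M) x x' := by
  simp only [dmm, natCast_card_filter_and, mul_apply, transpose_apply, arcMatrix, of_apply,
    eq_neg_one_iff_of_transpose_eq_neg hanti]

lemma dpm_eq_arcMatrix (hanti : Mᵀ = -M) (x x' : Fin n) :
    (dpm M x x' : ℝ) = (arcMatrix M * arcMatrix M) x x' := by
  simp only [dpm, natCast_card_filter_and, mul_apply, arcMatrix, of_apply,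
    eq_neg_one_iff_of_transpose_eq_neg hanti]

lemma dmp_eq_arcMatrix (hanti : Mᵀ = -M) (x x' : Fin n) :
    (dmp M x x' : ℝ) = (arcMatrix M * arcMatrix M)ᵀ x x' := by
  simp only [dmp, natCast_card_filter_and, transpose_apply, mul_apply, arcMatrix, of_apply,
    eq_neg_one_iff_of_transpose_eq_neg hanti, mul_comm]

end JointDegrees

theorem stmt4_general {n : ℕ} (M : Matrix (Fin n) (Fin n) ℝ)
    (hanti : Mᵀ = -M) :
    4 * ∑ x : Fin n, ∑ x' : Fin n, (dpp M x x' ^ 2 + dmm M x x' ^ 2) ≥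
      2 * ∑ x : Fin n, ∑ x' : Fin n,
        (dpp M x x' + dmm M x x') * (dpm M x x' + dmp M x x') := by
  rw [ge_iff_le, ← Nat.cast_le (α := ℝ)]
  push_cast
  simp only [dpp_eq_arcMatrix, dmm_eq_arcMatrix hanti, dpm_eq_arcMatrix hanti,
    dmp_eq_arcMatrix hanti]
  exact two_mul_sum_gram_mul_sq_le (arcMatrix M)

theorem stmt4 {n : ℕ} (M : Matrix (Fin n) (Fin n) ℝ)
    (hanti : Mᵀ = -M)
    (hent : ∀ x y, M x y = -1 ∨ M x y = 0 ∨ M x y = 1) :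
    4 * ∑ x : Fin n, ∑ x' : Fin n, (dpp M x x' ^ 2 + dmm M x x' ^ 2) ≥
      2 * ∑ x : Fin n, ∑ x' : Fin n,
        (dpp M x x' + dmm M x x') * (dpm M x x' + dmp M x x') :=
  stmt4_general M hanti
end

section
/- For every oriented graph D: 8·hom_IV(D) ≥ hom(C₄, D), where hom(C₄,D) = hom_I(D) + hom_II(D) + hom_III(D) + hom_IV(D) is the total number of homomorphic copies of the unoriented four-cycle, i.e., hom(C₄,D) = ∑_{x,x'}(a(x,x')+b(x,x'))² with a = d⁺⁺+d⁻⁻ and b = d⁺⁻+d⁻⁺. -/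
open Finset Matrix

/-!
With `A` the 0/1 adjacency matrix of `D`, the four joint degrees are the entries of `A Aᵀ`,
`Aᵀ A`, `A A` and `Aᵀ Aᵀ`. By cyclicity of the trace,
`∑ (A A)ᵢⱼ² = tr (A A Aᵀ Aᵀ) = tr (A Aᵀ Aᵀ A) = ∑ d⁺⁺ d⁻⁻`, and likewise for `Aᵀ Aᵀ`, so both
mixed terms of `hom(C₄, D)` are controlled by `∑ d⁺⁺ d⁻⁻ ≤ hom_IV / 2`. Together with
`(a + b + c + d)² ≤ 4 (a² + b² + c² + d²)` this gives the factor `8`.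
-/

namespace Matrix

variable {ι R : Type*}

theorem apply_eq_neg_one_iff_of_transpose_eq_neg [Ring R] {M : Matrix ι ι R}
    (hanti : Mᵀ = -M) (x y : ι) : M x y = -1 ↔ M y x = 1 := by
  rw [← neg_inj, ← neg_apply, ← hanti, transpose_apply, neg_neg]

variable [Fintype ι] [CommSemiring R]

theorem sum_sum_mul_apply_eq_trace_mul_transpose (P Q : Matrix ι ι R) :
    ∑ i, ∑ j, P i j * Q i j = trace (P * Qᵀ) := by
  simp [trace, mul_apply]

theorem sum_sum_mul_self_apply_sq (A : Matrix ι ι R) :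
    ∑ i, ∑ j, (A * A) i j ^ 2 = ∑ i, ∑ j, (A * Aᵀ) i j * (Aᵀ * A) i j := by
  simp only [sq, sum_sum_mul_apply_eq_trace_mul_transpose, transpose_mul, transpose_transpose]
  rw [Matrix.mul_assoc A A, trace_mul_comm A]
  simp only [Matrix.mul_assoc]

end Matrix

section JointDegrees

variable {n : ℕ} (M : Matrix (Fin n) (Fin n) ℝ)

noncomputable def outAdj : Matrix (Fin n) (Fin n) ℕ :=
  of fun x y => if M x y = 1 then 1 else 0

theorem dpp_eq_mul_transpose (x x' : Fin n) : dpp M x x' = (outAdj M * (outAdj M)ᵀ) x x' := by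
  rw [dpp, card_filter]
  simp only [outAdj, mul_apply, of_apply, transpose_apply, ite_zero_mul_ite_zero, mul_one]

variable {M}

theorem dmm_eq_transpose_mul (hanti : Mᵀ = -M) (x x' : Fin n) :
    dmm M x x' = ((outAdj M)ᵀ * outAdj M) x x' := by
  rw [dmm, card_filter]
  simp only [outAdj, mul_apply, of_apply, transpose_apply, ite_zero_mul_ite_zero, mul_one,
    apply_eq_neg_one_iff_of_transpose_eq_neg hanti]

theorem dpm_eq_mul_self (hanti : Mᵀ = -M) (x x' : Fin n) :
    dpm M x x' = (outAdj M * outAdj M) x x' := by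
  rw [dpm, card_filter]
  simp only [outAdj, mul_apply, of_apply, ite_zero_mul_ite_zero, mul_one,
    apply_eq_neg_one_iff_of_transpose_eq_neg hanti]

theorem dmp_eq_transpose_mul_transpose (hanti : Mᵀ = -M) (x x' : Fin n) :
    dmp M x x' = ((outAdj M)ᵀ * (outAdj M)ᵀ) x x' := by
  rw [dmp, card_filter]
  simp only [outAdj, mul_apply, of_apply, transpose_apply, ite_zero_mul_ite_zero, mul_one,
    apply_eq_neg_one_iff_of_transpose_eq_neg hanti]

end JointDegrees

theorem add_add_add_sq_le (a b c d : ℕ) :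
    (a + b + (c + d)) ^ 2 ≤ 4 * (a ^ 2 + b ^ 2) + 4 * c ^ 2 + 4 * d ^ 2 := by
  nlinarith [two_mul_le_add_sq a b, two_mul_le_add_sq a c, two_mul_le_add_sq a d,
    two_mul_le_add_sq b c, two_mul_le_add_sq b d, two_mul_le_add_sq c d]

theorem sum_sum_add_add_add_sq_le {ι : Type*} [Fintype ι] (a b c d : ι → ι → ℕ)
    (hc : ∑ i, ∑ j, c i j ^ 2 = ∑ i, ∑ j, a i j * b i j)
    (hd : ∑ i, ∑ j, d i j ^ 2 = ∑ i, ∑ j, a i j * b i j) :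
    ∑ i, ∑ j, (a i j + b i j + (c i j + d i j)) ^ 2 ≤
      8 * ∑ i, ∑ j, (a i j ^ 2 + b i j ^ 2) := by
  have hab : 2 * ∑ i, ∑ j, a i j * b i j ≤ ∑ i, ∑ j, (a i j ^ 2 + b i j ^ 2) := by
    simp only [mul_sum, ← mul_assoc]
    gcongr with i _ j _
    exact two_mul_le_add_sq _ _
  calc ∑ i, ∑ j, (a i j + b i j + (c i j + d i j)) ^ 2
      ≤ ∑ i, ∑ j, (4 * (a i j ^ 2 + b i j ^ 2) + 4 * c i j ^ 2 + 4 * d i j ^ 2) := by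
        gcongr with i _ j _
        exact add_add_add_sq_le _ _ _ _
    _ = 4 * ∑ i, ∑ j, (a i j ^ 2 + b i j ^ 2) + 4 * (2 * ∑ i, ∑ j, a i j * b i j) := by
        simp only [sum_add_distrib, ← mul_sum, hc, hd]
        ring
    _ ≤ 8 * ∑ i, ∑ j, (a i j ^ 2 + b i j ^ 2) := by omega

theorem stmt5_general {n : ℕ} (M : Matrix (Fin n) (Fin n) ℝ)
    (hanti : Mᵀ = -M) :
    8 * ∑ x : Fin n, ∑ x' : Fin n, (dpp M x x' ^ 2 + dmm M x x' ^ 2) ≥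
      ∑ x : Fin n, ∑ x' : Fin n,
        ((dpp M x x' + dmm M x x') + (dpm M x x' + dmp M x x')) ^ 2 := by
  have hpm := sum_sum_mul_self_apply_sq (outAdj M)
  have hmp := sum_sum_mul_self_apply_sq (outAdj M)ᵀ
  rw [transpose_transpose] at hmp
  simp only [← dpp_eq_mul_transpose, ← dmm_eq_transpose_mul hanti, ← dpm_eq_mul_self hanti,
    ← dmp_eq_transpose_mul_transpose hanti] at hpm hmp
  simp only [mul_comm (dmm M _ _)] at hmp
  exact sum_sum_add_add_add_sq_le _ _ _ _ hpm hmp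

theorem stmt5 {n : ℕ} (M : Matrix (Fin n) (Fin n) ℝ)
    (hanti : Mᵀ = -M)
    (hent : ∀ x y, M x y = -1 ∨ M x y = 0 ∨ M x y = 1) :
    8 * ∑ x : Fin n, ∑ x' : Fin n, (dpp M x x' ^ 2 + dmm M x x' ^ 2) ≥
      ∑ x : Fin n, ∑ x' : Fin n,
        ((dpp M x x' + dmm M x x') + (dpm M x x' + dmp M x x')) ^ 2 :=
  stmt5_general M hanti
end

section
/- Let D be an oriented graph on n vertices satisfying: e⃗(A,B) − e⃗(B,A) ≤ γn² for all A,B ⊆ V. Let H be a partially oriented graph on k vertices with e⃗(H) oriented edges. Then |hom(H,D) − hom(H̄,D)/2^{e⃗(H)}| ≤ (1 − 2^{−e⃗(H)})·γ·n^k, where H̄ is the underlying graph of H and hom counts homomorphisms (maps V(H) → V(D) sending oriented edges to arcs with matching orientation and unoriented edges to edges of the underlying graph of D). -/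
open Finset Matrix

/-- Number of arcs from `A` to `B` in the oriented graph with adjacency matrix `M`. -/
noncomputable def earr {n : ℕ} (M : Matrix (Fin n) (Fin n) ℝ)
    (A B : Finset (Fin n)) : ℕ :=
  ((A ×ˢ B).filter fun p => M p.1 p.2 = 1).card

/-- The number of homomorphisms from the partially oriented graph `(arc, edge)` on `Fin k`
into the oriented graph with adjacency matrix `M`: oriented edges must map to arcs with
matching orientation and unoriented edges to edges of the underlying graph. -/
noncomputable def homPO {n k : ℕ} (M : Matrix (Fin n) (Fin n) ℝ)
    (arc edge : Fin k → Fin k → Prop) : ℕ :=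
  Nat.card {f : Fin k → Fin n //
    (∀ x y, arc x y → M (f x) (f y) = 1) ∧
    (∀ x y, edge x y → M (f x) (f y) ≠ 0)}

/-- The number of homomorphisms from the underlying graph of the partially oriented graph
`(arc, edge)` into the underlying graph of the oriented graph with adjacency matrix `M`. -/
noncomputable def homUnder {n k : ℕ} (M : Matrix (Fin n) (Fin n) ℝ)
    (arc edge : Fin k → Fin k → Prop) : ℕ :=
  Nat.card {f : Fin k → Fin n //
    ∀ x y, (arc x y ∨ edge x y) → M (f x) (f y) ≠ 0}

/-- The number of oriented edges of the partially oriented graph `(arc, edge)`. -/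
noncomputable def numArcs {k : ℕ} (arc : Fin k → Fin k → Prop) : ℕ :=
  Nat.card {p : Fin k × Fin k // arc p.1 p.2}

/-!
Induction on the number of arcs. Unorienting an arc `a → b` of `H` gives `H'` with
`hom(H̄') = hom(H̄)` and `hom(H') = hom(H) + hom(Hʳ)`, where `Hʳ` reverses that arc, so it
suffices to show `|hom(H) - hom(Hʳ)| ≤ γ nᵏ`. With `M` the signed adjacency matrix this difference
is `∑ M (f a) (f b)` over the maps `f` respecting all other constraints of `H`. Once the values of
`f` off `{a, b}` are fixed, the admissible values at `a` and `b` form a product `A × B`, whose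
contribution `e⃗(A, B) - e⃗(B, A)` is at most `γ n²`; there are `nᵏ⁻²` such backgrounds.
-/

open Function

section Counting

variable {V W : Type*} [DecidableEq V]

theorem sum_sum_update_eq_card_mul [Fintype V] [Fintype W] (a : V) (F : (V → W) → ℝ) :
    ∑ g : V → W, ∑ u : W, F (update g a u) = Fintype.card W * ∑ f, F f := by
  let e : (V → W) × W ≃ (V → W) × W :=
    { toFun := fun p => (update p.1 a p.2, p.1 a)
      invFun := fun p => (update p.1 a p.2, p.1 a)
      left_inv := fun p => by simp
      right_inv := fun p => by simp }
  calc ∑ g : V → W, ∑ u : W, F (update g a u)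
      = ∑ p : (V → W) × W, F (e p).1 := by rw [Fintype.sum_prod_type]; rfl
    _ = ∑ p : (V → W) × W, F p.1 := e.sum_comp (fun p => F p.1)
    _ = Fintype.card W * ∑ f, F f := by
      rw [Fintype.sum_prod_type, Finset.mul_sum]; simp

/-- For every background `g`, the admissible values at `(a, b)` form a product set. -/
def IsRectangleAt (a b : V) (P : (V → W) → Prop) : Prop :=
  ∀ g u v u' v', P (update (update g a u) b v') → P (update (update g a u') b v) →
    P (update (update g a u) b v)

theorem IsRectangleAt.sum_sum_ite_le [Fintype W] {a b : V} {P : (V → W) → Prop}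
    [DecidablePred P] (hP : IsRectangleAt a b P) (M : Matrix W W ℝ) {c : ℝ}
    (hM : ∀ A B : Finset W, ∑ u ∈ A, ∑ v ∈ B, M u v ≤ c) (g : V → W) :
    ∑ u, ∑ v, (if P (update (update g a u) b v) then M u v else 0) ≤ c := by
  classical
  set A := Finset.univ.filter fun u => ∃ v, P (update (update g a u) b v)
  set B := Finset.univ.filter fun v => ∃ u, P (update (update g a u) b v)
  have hprod : ∀ u v, P (update (update g a u) b v) ↔ u ∈ A ∧ v ∈ B := by
    intro u v
    simp only [A, B, Finset.mem_filter, Finset.mem_univ, true_and]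
    exact ⟨fun h => ⟨⟨v, h⟩, ⟨u, h⟩⟩, fun ⟨⟨v', hv'⟩, ⟨u', hu'⟩⟩ => hP g u v u' v' hv' hu'⟩
  calc ∑ u, ∑ v, (if P (update (update g a u) b v) then M u v else 0)
      = ∑ u, ∑ v, (if u ∈ A then (if v ∈ B then M u v else 0) else 0) := by
        refine Fintype.sum_congr _ _ fun u => Fintype.sum_congr _ _ fun v => ?_
        rw [← ite_and]; exact if_congr (hprod u v) rfl rfl
    _ = ∑ u ∈ A, ∑ v ∈ B, M u v := by
        simp only [Finset.sum_ite_irrel, Finset.sum_const_zero, Finset.sum_ite_mem,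
          Finset.univ_inter]
    _ ≤ c := hM A B

theorem IsRectangleAt.sum_ite_le [Fintype V] [Fintype W] {a b : V} (hab : a ≠ b)
    {P : (V → W) → Prop} [DecidablePred P] (hP : IsRectangleAt a b P) (M : Matrix W W ℝ) {γ : ℝ}
    (hM : ∀ A B : Finset W, ∑ u ∈ A, ∑ v ∈ B, M u v ≤ γ * Fintype.card W ^ 2) :
    ∑ f : V → W, (if P f then M (f a) (f b) else 0) ≤ γ * Fintype.card W ^ Fintype.card V := by
  rcases isEmpty_or_nonempty W with hW | hW
  · have : IsEmpty (V → W) := ⟨fun f => hW.false (f a)⟩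
    have : Nonempty V := ⟨a⟩
    simp [zero_pow Fintype.card_ne_zero]
  set T : (V → W) → ℝ := fun f => if P f then M (f a) (f b) else 0
  have hT : ∀ g u v, T (update (update g a u) b v) =
      if P (update (update g a u) b v) then M u v else 0 := by
    intro g u v
    simp [T, hab]
  have hpos : (0 : ℝ) < Fintype.card W ^ 2 := by positivity
  refine le_of_mul_le_mul_left ?_ hpos
  calc (Fintype.card W : ℝ) ^ 2 * ∑ f, T f
      = ∑ g : V → W, ∑ u, ∑ v, T (update (update g a u) b v) := by
        rw [sum_sum_update_eq_card_mul a (fun h => ∑ v, T (update h b v)),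
          sum_sum_update_eq_card_mul b T]
        ring
    _ ≤ ∑ _g : V → W, γ * Fintype.card W ^ 2 := by
        gcongr with g
        simp only [hT]
        exact hP.sum_sum_ite_le M hM g
    _ = Fintype.card W ^ 2 * (γ * Fintype.card W ^ Fintype.card V) := by
        simp only [sum_const, card_univ, Fintype.card_pi, prod_const, nsmul_eq_mul, Nat.cast_pow]
        ring

end Counting

section Orientation

variable {W : Type*} {M : Matrix W W ℝ}

theorem entry_swap (hanti : Mᵀ = -M) (u v : W) : M v u = -M u v := by
  simpa using congrFun (congrFun hanti u) v

theorem entry_eq_ite_sub_ite (hanti : Mᵀ = -M) (hent : ∀ x y, M x y = -1 ∨ M x y = 0 ∨ M x y = 1)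
    (u v : W) : M u v = (if M u v = 1 then 1 else 0) - (if M v u = 1 then 1 else 0) := by
  rw [entry_swap hanti u v]
  rcases hent u v with h | h | h <;> rw [h] <;> norm_num

end Orientation

section PartialOrientation

variable {V W : Type*}

structure IsPartialOrientation (arc edge : V → V → Prop) : Prop where
  edge_symm : ∀ x y, edge x y → edge y x
  edge_irrefl : ∀ x, ¬ edge x x
  arc_irrefl : ∀ x, ¬ arc x x
  arc_asymm : ∀ x y, arc x y → ¬ arc y x
  arc_not_edge : ∀ x y, arc x y → ¬ edge x y

def eraseArc (arc : V → V → Prop) (a b : V) : V → V → Prop :=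
  fun x y => arc x y ∧ ¬(x = a ∧ y = b)

def insertEdge (edge : V → V → Prop) (a b : V) : V → V → Prop :=
  fun x y => edge x y ∨ (x = a ∧ y = b) ∨ (x = b ∧ y = a)

namespace IsPartialOrientation

variable {arc edge : V → V → Prop} {a b : V}

theorem ne_of_arc (h : IsPartialOrientation arc edge) (hab : arc a b) : a ≠ b := by
  rintro rfl
  exact h.arc_irrefl a hab

theorem unorient (h : IsPartialOrientation arc edge) (hab : arc a b) :
    IsPartialOrientation (eraseArc arc a b) (insertEdge edge a b) where
  edge_symm := by
    rintro x y (h' | ⟨rfl, rfl⟩ | ⟨rfl, rfl⟩)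
    exacts [Or.inl (h.edge_symm x y h'), Or.inr (Or.inr ⟨rfl, rfl⟩), Or.inr (Or.inl ⟨rfl, rfl⟩)]
  edge_irrefl := by
    rintro x (h' | ⟨rfl, h'⟩ | ⟨rfl, h'⟩)
    exacts [h.edge_irrefl x h', h.ne_of_arc hab h', h.ne_of_arc hab h'.symm]
  arc_irrefl x h' := h.arc_irrefl x h'.1
  arc_asymm x y h' h'' := h.arc_asymm x y h'.1 h''.1
  arc_not_edge := by
    rintro x y h' (h'' | ⟨rfl, rfl⟩ | ⟨rfl, rfl⟩)
    exacts [h.arc_not_edge x y h'.1 h'', h'.2 ⟨rfl, rfl⟩, h.arc_asymm _ _ hab h'.1]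

theorem not_eraseArc_and_not_edge (h : IsPartialOrientation arc edge) (hab : arc a b) {x y : V}
    (hx : x = a ∨ x = b) (hy : y = a ∨ y = b) : ¬ eraseArc arc a b x y ∧ ¬ edge x y := by
  have hba : ¬ edge b a := fun h' => h.arc_not_edge a b hab (h.edge_symm b a h')
  rcases hx with rfl | rfl <;> rcases hy with rfl | rfl
  exacts [⟨fun h' => h.arc_irrefl _ h'.1, h.edge_irrefl _⟩,
    ⟨fun h' => h'.2 ⟨rfl, rfl⟩, h.arc_not_edge _ _ hab⟩,
    ⟨fun h' => h.arc_asymm _ _ hab h'.1, hba⟩,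
    ⟨fun h' => h.arc_irrefl _ h'.1, h.edge_irrefl _⟩]

end IsPartialOrientation

def IsHomPO (M : Matrix W W ℝ) (arc edge : V → V → Prop) (f : V → W) : Prop :=
  ∀ x y, (arc x y → M (f x) (f y) = 1) ∧ (edge x y → M (f x) (f y) ≠ 0)

theorem isRectangleAt_isHomPO [DecidableEq V] {a b : V} (hab : a ≠ b) (M : Matrix W W ℝ)
    {arc edge : V → V → Prop}
    (hno : ∀ x y, (x = a ∨ x = b) → (y = a ∨ y = b) → ¬ arc x y ∧ ¬ edge x y) :
    IsRectangleAt a b (IsHomPO M arc edge) := by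
  intro g u v u' v' h₁ h₂ x y
  by_cases hin : (x = a ∨ x = b) ∧ (y = a ∨ y = b)
  · obtain ⟨hxy, hxy'⟩ := hno x y hin.1 hin.2
    exact ⟨fun h => absurd h hxy, fun h => absurd h hxy'⟩
  -- a constraint touching at most one of `a`, `b` is checked by `h₁` or by `h₂`
  have hmiss : (x ≠ b ∧ y ≠ b) ∨ (x ≠ a ∧ y ≠ a) := by
    by_cases hxa : x = a <;> by_cases hxb : x = b <;> by_cases hya : y = a <;>
      by_cases hyb : y = b <;> simp_all
  rcases hmiss with ⟨hx, hy⟩ | ⟨hx, hy⟩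
  · simpa [update_of_ne hx, update_of_ne hy] using h₁ x y
  · simpa [update_apply, hx, hy] using h₂ x y

end PartialOrientation

section Counts

variable {V W : Type*} {M : Matrix W W ℝ} {arc edge : V → V → Prop} {a b : V}

theorem isHomPO_iff_eraseArc (hab : arc a b) (f : V → W) :
    IsHomPO M arc edge f ↔ IsHomPO M (eraseArc arc a b) edge f ∧ M (f a) (f b) = 1 := by
  refine ⟨fun h => ⟨fun x y => ⟨fun h' => (h x y).1 h'.1, (h x y).2⟩, (h a b).1 hab⟩,
    fun ⟨h, hM⟩ x y => ⟨fun h' => ?_, (h x y).2⟩⟩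
  by_cases hxy : x = a ∧ y = b
  · rwa [hxy.1, hxy.2]
  · exact (h x y).1 ⟨h', hxy⟩

theorem isHomPO_insertEdge_iff (hanti : Mᵀ = -M) (f : V → W) :
    IsHomPO M arc (insertEdge edge a b) f ↔ IsHomPO M arc edge f ∧ M (f a) (f b) ≠ 0 := by
  have hba : M (f b) (f a) ≠ 0 ↔ M (f a) (f b) ≠ 0 := by rw [entry_swap hanti, neg_ne_zero]
  refine ⟨fun h => ⟨fun x y => ⟨(h x y).1, fun h' => (h x y).2 (Or.inl h')⟩,
    (h a b).2 (Or.inr (Or.inl ⟨rfl, rfl⟩))⟩, fun ⟨h, hM⟩ x y => ⟨(h x y).1, ?_⟩⟩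
  rintro (h' | ⟨rfl, rfl⟩ | ⟨rfl, rfl⟩)
  exacts [(h x y).2 h', hM, hba.2 hM]

variable [Fintype V] [DecidableEq V] [Fintype W]

theorem natCard_sub_natCard_eq_sum (hanti : Mᵀ = -M)
    (hent : ∀ x y, M x y = -1 ∨ M x y = 0 ∨ M x y = 1) (P : (V → W) → Prop) [DecidablePred P] :
    (Nat.card {f // P f ∧ M (f a) (f b) = 1} : ℝ) - Nat.card {f // P f ∧ M (f b) (f a) = 1} =
      ∑ f : V → W, (if P f then M (f a) (f b) else 0) := by
  classical
  simp only [Nat.card_eq_fintype_card, Fintype.card_subtype, Finset.card_filter, Nat.cast_sum,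
    Nat.cast_ite, Nat.cast_one, Nat.cast_zero, ← Finset.sum_sub_distrib, ite_and]
  refine Fintype.sum_congr _ _ fun f => ?_
  by_cases hP : P f
  · simp only [hP, if_true]
    exact (entry_eq_ite_sub_ite hanti hent _ _).symm
  · simp [hP]

theorem abs_natCard_sub_natCard_le (hab : a ≠ b) (hanti : Mᵀ = -M)
    (hent : ∀ x y, M x y = -1 ∨ M x y = 0 ∨ M x y = 1) {P : (V → W) → Prop}
    (hPab : IsRectangleAt a b P) (hPba : IsRectangleAt b a P) {γ : ℝ}
    (hM : ∀ A B : Finset W, ∑ u ∈ A, ∑ v ∈ B, M u v ≤ γ * Fintype.card W ^ 2) :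
    |(Nat.card {f // P f ∧ M (f a) (f b) = 1} : ℝ) - Nat.card {f // P f ∧ M (f b) (f a) = 1}| ≤
      γ * Fintype.card W ^ Fintype.card V := by
  classical
  refine abs_sub_le_iff.2 ⟨?_, ?_⟩
  · rw [natCard_sub_natCard_eq_sum hanti hent]
    exact hPab.sum_ite_le hab M hM
  · rw [natCard_sub_natCard_eq_sum hanti hent]
    exact hPba.sum_ite_le hab.symm M hM

end Counts

theorem abs_sub_div_two_pow_succ_le {x y u c : ℝ} {m : ℕ} (hxy : |x - y| ≤ c)
    (hsum : |x + y - u / 2 ^ m| ≤ (1 - 1 / 2 ^ m) * c) :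
    |x - u / 2 ^ (m + 1)| ≤ (1 - 1 / 2 ^ (m + 1)) * c := by
  have hsplit : x - u / 2 ^ (m + 1) = ((x - y) + (x + y - u / 2 ^ m)) / 2 := by
    rw [pow_succ]; field_simp; ring
  have hbound : (1 - 1 / 2 ^ (m + 1)) * c = (c + (1 - 1 / 2 ^ m) * c) / 2 := by
    rw [pow_succ]; field_simp; ring
  rw [hsplit, hbound, abs_div, abs_two]
  gcongr
  exact (abs_add_le _ _).trans (add_le_add hxy hsum)

section Hom

variable {n k : ℕ} {M : Matrix (Fin n) (Fin n) ℝ} {arc edge : Fin k → Fin k → Prop} {a b : Fin k}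

theorem earr_sub_earr_eq_sum (hanti : Mᵀ = -M)
    (hent : ∀ x y, M x y = -1 ∨ M x y = 0 ∨ M x y = 1) (A B : Finset (Fin n)) :
    (earr M A B : ℝ) - earr M B A = ∑ u ∈ A, ∑ v ∈ B, M u v := by
  simp only [earr, Finset.card_filter, Finset.sum_product, Nat.cast_sum, Nat.cast_ite,
    Nat.cast_one, Nat.cast_zero]
  rw [Finset.sum_comm (s := B), ← Finset.sum_sub_distrib]
  refine Finset.sum_congr rfl fun u _ => ?_
  rw [← Finset.sum_sub_distrib]
  exact Finset.sum_congr rfl fun v _ => (entry_eq_ite_sub_ite hanti hent u v).symm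

theorem homPO_eq_natCard_isHomPO :
    homPO M arc edge = Nat.card {f // IsHomPO M arc edge f} :=
  Nat.card_congr (Equiv.subtypeEquivRight fun f => by simp only [IsHomPO, forall_and])

theorem homPO_eq_natCard_eraseArc (hab : arc a b) :
    homPO M arc edge =
      Nat.card {f // IsHomPO M (eraseArc arc a b) edge f ∧ M (f a) (f b) = 1} := by
  rw [homPO_eq_natCard_isHomPO]
  exact Nat.card_congr (Equiv.subtypeEquivRight (isHomPO_iff_eraseArc hab))

theorem homPO_unorient (hanti : Mᵀ = -M) (hent : ∀ x y, M x y = -1 ∨ M x y = 0 ∨ M x y = 1) :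
    homPO M (eraseArc arc a b) (insertEdge edge a b) =
      Nat.card {f // IsHomPO M (eraseArc arc a b) edge f ∧ M (f a) (f b) = 1} +
        Nat.card {f // IsHomPO M (eraseArc arc a b) edge f ∧ M (f b) (f a) = 1} := by
  classical
  have hdisj : Disjoint (fun f : Fin k → Fin n => IsHomPO M (eraseArc arc a b) edge f ∧
      M (f a) (f b) = 1) (fun f => IsHomPO M (eraseArc arc a b) edge f ∧ M (f b) (f a) = 1) := by
    rw [Pi.disjoint_iff]
    intro f
    simp only [Prop.disjoint_iff, not_and]
    rintro ⟨-, h⟩ - h'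
    rw [entry_swap hanti, h] at h'
    norm_num at h'
  rw [homPO_eq_natCard_isHomPO, ← Nat.card_sum, ← Nat.card_congr (subtypeOrEquiv _ _ hdisj)]
  refine Nat.card_congr (Equiv.subtypeEquivRight fun f => ?_)
  rw [isHomPO_insertEdge_iff hanti, ← and_or_left, entry_swap hanti (f a) (f b), neg_eq_iff_eq_neg]
  rcases hent (f a) (f b) with h | h | h <;> simp [h]

theorem homUnder_unorient (hanti : Mᵀ = -M) (hab : arc a b) :
    homUnder M (eraseArc arc a b) (insertEdge edge a b) = homUnder M arc edge := by
  refine Nat.card_congr (Equiv.subtypeEquivRight fun f =>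
    ⟨fun h x y hxy => ?_, fun h x y hxy => ?_⟩)
  · rcases hxy with hxy | hxy
    · by_cases hxy' : x = a ∧ y = b
      · exact h x y (Or.inr (Or.inr (Or.inl hxy')))
      · exact h x y (Or.inl ⟨hxy, hxy'⟩)
    · exact h x y (Or.inr (Or.inl hxy))
  · rcases hxy with hxy | hxy | ⟨rfl, rfl⟩ | ⟨rfl, rfl⟩
    · exact h x y (Or.inl hxy.1)
    · exact h x y (Or.inr hxy)
    · exact h x y (Or.inl hab)
    · rw [entry_swap hanti, neg_ne_zero]
      exact h y x (Or.inl hab)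

theorem numArcs_eraseArc_add_one (hab : arc a b) :
    numArcs (eraseArc arc a b) + 1 = numArcs arc := by
  classical
  have hdisj : Disjoint (fun p : Fin k × Fin k => eraseArc arc a b p.1 p.2) (· = (a, b)) := by
    rw [Pi.disjoint_iff]
    rintro p
    simp only [Prop.disjoint_iff, not_and]
    rintro ⟨-, h⟩ rfl
    exact h ⟨rfl, rfl⟩
  rw [numArcs, numArcs, ← Nat.card_unique (α := {p : Fin k × Fin k // p = (a, b)}), ← Nat.card_sum,
    ← Nat.card_congr (subtypeOrEquiv _ _ hdisj)]
  refine Nat.card_congr (Equiv.subtypeEquivRight fun p => ?_)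
  by_cases hp : p = (a, b)
  · subst hp; simpa using hab
  · have hp' : ¬(p.1 = a ∧ p.2 = b) := fun h => hp (Prod.ext h.1 h.2)
    simp [eraseArc, hp, hp']

theorem homPO_eq_homUnder_of_numArcs_eq_zero (h : numArcs arc = 0) :
    homPO M arc edge = homUnder M arc edge := by
  have harc : ∀ x y, ¬ arc x y := fun x y hxy => (Finite.card_eq_zero_iff.1 h).false ⟨(x, y), hxy⟩
  refine Nat.card_congr (Equiv.subtypeEquivRight fun f => ?_)
  simp [harc]

theorem abs_homPO_sub_homUnder_div_le (hanti : Mᵀ = -M)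
    (hent : ∀ x y, M x y = -1 ∨ M x y = 0 ∨ M x y = 1) {γ : ℝ}
    (hM : ∀ A B : Finset (Fin n), ∑ u ∈ A, ∑ v ∈ B, M u v ≤ γ * n ^ 2)
    (h : IsPartialOrientation arc edge) :
    |(homPO M arc edge : ℝ) - homUnder M arc edge / 2 ^ numArcs arc| ≤
      (1 - 1 / 2 ^ numArcs arc) * (γ * n ^ k) := by
  induction hm : numArcs arc generalizing arc edge with
  | zero => simp [homPO_eq_homUnder_of_numArcs_eq_zero hm]
  | succ m ih =>
    have hpos : 0 < numArcs arc := hm ▸ m.succ_pos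
    obtain ⟨⟨⟨a, b⟩, hab⟩⟩ := (Nat.card_pos_iff.1 hpos).1
    have hunorient := ih (h.unorient hab) (by have := numArcs_eraseArc_add_one hab; omega)
    rw [homPO_unorient hanti hent, homUnder_unorient hanti hab, Nat.cast_add] at hunorient
    have hflip := abs_natCard_sub_natCard_le (h.ne_of_arc hab) hanti hent
      (isRectangleAt_isHomPO (h.ne_of_arc hab) M fun x y hx hy =>
        h.not_eraseArc_and_not_edge hab hx hy)
      (isRectangleAt_isHomPO (h.ne_of_arc hab).symm M fun x y hx hy =>
        h.not_eraseArc_and_not_edge hab hx.symm hy.symm)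
      (by simpa using hM)
    simp only [Fintype.card_fin] at hflip
    rw [homPO_eq_natCard_eraseArc hab]
    exact abs_sub_div_two_pow_succ_le hflip hunorient

end Hom

theorem stmt13 {n k : ℕ} (M : Matrix (Fin n) (Fin n) ℝ)
    (hanti : Mᵀ = -M)
    (hent : ∀ x y, M x y = -1 ∨ M x y = 0 ∨ M x y = 1)
    (γ : ℝ)
    (hP6 : ∀ A B : Finset (Fin n), (earr M A B : ℝ) - earr M B A ≤ γ * n ^ 2)
    (arc edge : Fin k → Fin k → Prop)
    (hedge_symm : ∀ x y, edge x y → edge y x)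
    (hedge_irr : ∀ x, ¬ edge x x)
    (harc_irr : ∀ x, ¬ arc x x)
    (harc_asymm : ∀ x y, arc x y → ¬ arc y x)
    (hdisj : ∀ x y, arc x y → ¬ edge x y) :
    |(homPO M arc edge : ℝ) - (homUnder M arc edge : ℝ) / 2 ^ numArcs arc| ≤
      (1 - (1 : ℝ) / 2 ^ numArcs arc) * γ * n ^ k := by
  have hM (A B : Finset (Fin n)) : ∑ u ∈ A, ∑ v ∈ B, M u v ≤ γ * n ^ 2 :=
    earr_sub_earr_eq_sum hanti hent A B ▸ hP6 A B
  rw [mul_assoc]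
  exact abs_homPO_sub_homUnder_div_le hanti hent hM
    ⟨hedge_symm, hedge_irr, harc_irr, harc_asymm, hdisj⟩
end

section
/- Let D be an oriented graph on n vertices. If |hom_IV(D) − (1/8)·hom(C₄,D)| ≤ αn⁴, then |hom_II(D) − (1/2)·hom(C₄,D)| ≤ 4αn⁴. (I.e., P1(α) implies P2 with δ = 8α.) -/
open Finset Matrix

/-- hom_I(D) -/
noncomputable def homI {n : ℕ} (M : Matrix (Fin n) (Fin n) ℝ) : ℕ :=
  2 * ∑ x : Fin n, ∑ x' : Fin n, dpm M x x' * dmp M x x'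

/-- hom_II(D) -/
noncomputable def homII {n : ℕ} (M : Matrix (Fin n) (Fin n) ℝ) : ℕ :=
  2 * ∑ x : Fin n, ∑ x' : Fin n,
    (dpp M x x' + dmm M x x') * (dpm M x x' + dmp M x x')

/-- hom_III(D) -/
noncomputable def homIII {n : ℕ} (M : Matrix (Fin n) (Fin n) ℝ) : ℕ :=
  2 * ∑ x : Fin n, ∑ x' : Fin n, (dpm M x x' ^ 2 + dmp M x x' ^ 2)

/-- hom_IV(D) -/
noncomputable def homIV {n : ℕ} (M : Matrix (Fin n) (Fin n) ℝ) : ℕ :=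
  ∑ x : Fin n, ∑ x' : Fin n, (dpp M x x' ^ 2 + dmm M x x' ^ 2)

/-- hom(C₄,D) -/
noncomputable def homC4 {n : ℕ} (M : Matrix (Fin n) (Fin n) ℝ) : ℕ :=
  homI M + homII M + homIII M + homIV M

/-!
Double counting the quadruples `(x, x', y, z)` with `M x y = M x' y = 1` and `M x z = M x' z = -1`,
and reading `M x y = 1` as `M y x = -1`, gives `∑ d⁺⁺ d⁻⁻ = ∑ (d⁻⁺)²` for an oriented graph.
With AM-GM this yields `hom_I ≤ hom_III / 2 ≤ hom_IV` and `hom_II ≤ hom_I + hom_III + hom_IV`, that is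
`2 hom_II ≤ hom(C₄)` and `hom(C₄) ≤ hom_II + 4 hom_IV`. Hence
`0 ≤ hom(C₄) / 2 - hom_II ≤ 4 (hom_IV - hom(C₄) / 8)`.
-/

lemma sum_gram_mul_gram_eq_sum_sq {ι κ R : Type*} [Fintype ι] [Fintype κ] [CommSemiring R]
    (f g : ι → κ → R) :
    ∑ x, ∑ x', (∑ y, f x y * f x' y) * (∑ z, g x z * g x' z) =
      ∑ y, ∑ z, (∑ x, f x y * g x z) ^ 2 := by
  simp only [sq, Finset.sum_mul_sum]
  calc ∑ x, ∑ x', ∑ y, ∑ z, f x y * f x' y * (g x z * g x' z)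
      = ∑ x, ∑ y, ∑ z, ∑ x', f x y * g x z * (f x' y * g x' z) := by
        refine sum_congr rfl fun x _ => ?_
        rw [sum_comm]
        refine sum_congr rfl fun y _ => ?_
        rw [sum_comm]
        exact sum_congr rfl fun z _ => sum_congr rfl fun x' _ => by ring
    _ = ∑ y, ∑ z, ∑ x, ∑ x', f x y * g x z * (f x' y * g x' z) := by
        rw [sum_comm]
        exact sum_congr rfl fun y _ => sum_comm

/-- `dpp`, `dmm`, `dpm` and `dmp` are `jointDeg M s t` with `s t ∈ {1, -1}`, definitionally. -/
noncomputable def jointDeg {n : ℕ} (M : Matrix (Fin n) (Fin n) ℝ) (s t : ℝ) (x x' : Fin n) : ℕ :=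
  (univ.filter fun y => M x y = s ∧ M x' y = t).card

lemma jointDeg_neg {n : ℕ} (M : Matrix (Fin n) (Fin n) ℝ) (s t : ℝ) :
    jointDeg (-M) s t = jointDeg M (-s) (-t) := by
  ext x x'
  simp only [jointDeg]
  congr 1
  ext y
  simp [neg_eq_iff_eq_neg]

lemma jointDeg_eq_sum {n : ℕ} (M : Matrix (Fin n) (Fin n) ℝ) (s t : ℝ) (x x' : Fin n) :
    jointDeg M s t x x' = ∑ y, (if M x y = s then 1 else 0) * (if M x' y = t then 1 else 0) := by
  simp only [jointDeg, card_filter, ite_zero_mul_ite_zero, mul_one]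

lemma sum_jointDeg_mul_jointDeg {n : ℕ} (M : Matrix (Fin n) (Fin n) ℝ) (s t : ℝ) :
    ∑ x, ∑ x', jointDeg M s s x x' * jointDeg M t t x x' =
      ∑ y, ∑ z, jointDeg Mᵀ s t y z ^ 2 := by
  simp only [jointDeg_eq_sum, transpose_apply]
  exact sum_gram_mul_gram_eq_sum_sq _ _

lemma sum_dpm_sq_eq_sum_dmp_sq {n : ℕ} (M : Matrix (Fin n) (Fin n) ℝ) :
    ∑ x, ∑ x', dpm M x x' ^ 2 = ∑ x, ∑ x', dmp M x x' ^ 2 := by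
  have hswap : ∀ x x', dpm M x x' = dmp M x' x := fun x x' => by
    simp only [dpm, dmp, and_comm]
  simp only [hswap]
  exact sum_comm

lemma sum_dpp_mul_dmm_eq_sum_dmp_sq {n : ℕ} (M : Matrix (Fin n) (Fin n) ℝ) (hanti : Mᵀ = -M) :
    ∑ x, ∑ x', dpp M x x' * dmm M x x' = ∑ x, ∑ x', dmp M x x' ^ 2 := by
  have h := sum_jointDeg_mul_jointDeg M 1 (-1)
  rwa [hanti, jointDeg_neg, neg_neg] at h

lemma homIII_eq {n : ℕ} (M : Matrix (Fin n) (Fin n) ℝ) :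
    homIII M = 4 * ∑ x, ∑ x', dmp M x x' ^ 2 := by
  rw [homIII]
  simp only [sum_add_distrib, sum_dpm_sq_eq_sum_dmp_sq]
  ring

lemma two_mul_homI_le_homIII {n : ℕ} (M : Matrix (Fin n) (Fin n) ℝ) :
    2 * homI M ≤ homIII M := by
  simp only [homI, homIII, mul_sum]
  gcongr with x _ x' _
  linarith [two_mul_le_add_sq (dpm M x x') (dmp M x x')]

lemma two_mul_sum_dpp_mul_dmm_le_homIV {n : ℕ} (M : Matrix (Fin n) (Fin n) ℝ) :
    2 * ∑ x, ∑ x', dpp M x x' * dmm M x x' ≤ homIV M := by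
  simp only [homIV, mul_sum]
  gcongr with x _ x' _
  linarith [two_mul_le_add_sq (dpp M x x') (dmm M x x')]

lemma homIII_le_two_mul_homIV {n : ℕ} (M : Matrix (Fin n) (Fin n) ℝ) (hanti : Mᵀ = -M) :
    homIII M ≤ 2 * homIV M := by
  have := two_mul_sum_dpp_mul_dmm_le_homIV M
  rw [homIII_eq, ← sum_dpp_mul_dmm_eq_sum_dmp_sq M hanti]
  omega

lemma homII_le_homI_add_homIII_add_homIV {n : ℕ} (M : Matrix (Fin n) (Fin n) ℝ)
    (hanti : Mᵀ = -M) : homII M ≤ homI M + homIII M + homIV M := by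
  have hIII : homIII M =
      ∑ x, ∑ x', (2 * (dpp M x x' * dmm M x x') + (dpm M x x' ^ 2 + dmp M x x' ^ 2)) := by
    simp only [sum_add_distrib, ← mul_sum, sum_dpp_mul_dmm_eq_sum_dmp_sq M hanti,
      sum_dpm_sq_eq_sum_dmp_sq, homIII_eq]
    ring
  simp only [homI, homII, homIV, hIII, mul_sum, ← sum_add_distrib]
  gcongr with x _ x' _
  nlinarith [two_mul_le_add_sq (dpp M x x' + dmm M x x') (dpm M x x' + dmp M x x')]

lemma two_mul_homII_le_homC4 {n : ℕ} (M : Matrix (Fin n) (Fin n) ℝ) (hanti : Mᵀ = -M) :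
    2 * homII M ≤ homC4 M := by
  have := homII_le_homI_add_homIII_add_homIV M hanti
  rw [homC4]
  omega

lemma homC4_le_homII_add_four_mul_homIV {n : ℕ} (M : Matrix (Fin n) (Fin n) ℝ)
    (hanti : Mᵀ = -M) : homC4 M ≤ homII M + 4 * homIV M := by
  have hI := two_mul_homI_le_homIII M
  have hIII := homIII_le_two_mul_homIV M hanti
  rw [homC4]
  omega

theorem stmt16_general {n : ℕ} (M : Matrix (Fin n) (Fin n) ℝ)
    (hanti : Mᵀ = -M)
    (α : ℝ)
    (h1 : |(homIV M : ℝ) - (1 / 8) * homC4 M| ≤ α * n ^ 4) :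
    |(homII M : ℝ) - (1 / 2) * homC4 M| ≤ 4 * α * n ^ 4 := by
  have hlower : 2 * (homII M : ℝ) ≤ homC4 M := by
    exact_mod_cast two_mul_homII_le_homC4 M hanti
  have hupper : (homC4 M : ℝ) ≤ homII M + 4 * homIV M := by
    exact_mod_cast homC4_le_homII_add_four_mul_homIV M hanti
  have hα : 0 ≤ α * n ^ 4 := (abs_nonneg _).trans h1
  rw [abs_le] at h1 ⊢
  constructor <;> linarith

theorem stmt16 {n : ℕ} (M : Matrix (Fin n) (Fin n) ℝ)
    (hanti : Mᵀ = -M)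
    (hent : ∀ x y, M x y = -1 ∨ M x y = 0 ∨ M x y = 1)
    (α : ℝ)
    (h1 : |(homIV M : ℝ) - (1 / 8) * homC4 M| ≤ α * n ^ 4) :
    |(homII M : ℝ) - (1 / 2) * homC4 M| ≤ 4 * α * n ^ 4 :=
  stmt16_general M hanti α h1
end
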